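/- Let n ≥ 2 and let i = (i_1,…,i_n) and i' = (i'_1,…,i'_n) be tuples of integers that are both nondecreasing (i_1 ≤ i_2 ≤ ⋯ ≤ i_n and likewise for i'), and suppose i' − i = Σ_{l=1}^{j} p_l α_{k_l} with j ≥ 1, all p_l > 0, and α_k = (0,…,0,−1,1,0,…,0) with the −1 in position k. Then ⟨i'+i, i'−i⟩ + 2Σ_{l=1}^{j} p_l > 0, where ⟨·,·⟩ is the standard dot product on ℤ^n. -/
import Mathlib


/-- Let `n ≥ 2` and let `i, i' : Fin n → ℤ` be nondecreasing tuples (dominant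
`sl_n`-weights).  Suppose `i' − i = Σ_{l} p_l α_{k_l}` with `j ≥ 1`, all `p_l > 0`,
and `α_k = (0,…,0,−1,1,0,…,0)` with the `−1` in (1-indexed) position `k`.  Then
`⟨i'+i, i'−i⟩ + 2 Σ_l p_l > 0`, where `⟨·,·⟩` is the standard dot product. -/
theorem dominant_positivity (n : ℕ) (hn : 2 ≤ n) (i i' : Fin n → ℤ)
    (hi : Monotone i) (hi' : Monotone i')
    (j : ℕ) (hj : 1 ≤ j) (p : Fin j → ℤ) (hp : ∀ l, 0 < p l)
    (k : Fin j → ℕ) (hk : ∀ l, 1 ≤ k l ∧ k l ≤ n - 1)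
    (hdiff : ∀ t : Fin n, i' t - i t =
      ∑ l, p l * (if (t : ℕ) + 1 = k l then -1 else if (t : ℕ) = k l then 1 else 0)) :
    0 < (∑ t, (i' t + i t) * (i' t - i t)) + 2 * ∑ l, p l := by
  have hkn : ∀ l, k l < n := fun l => lt_of_le_of_lt (hk l).2 (by omega)
  have hkn' : ∀ l, k l - 1 < n := fun l => lt_of_le_of_lt (Nat.sub_le _ _) (hkn l)
  have h1 : (∑ t, (i' t + i t) * (i' t - i t))
      = ∑ l, p l * ((i' ⟨k l, hkn l⟩ + i ⟨k l, hkn l⟩)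
          - (i' ⟨k l - 1, hkn' l⟩ + i ⟨k l - 1, hkn' l⟩)) := by
    calc ∑ t, (i' t + i t) * (i' t - i t)
        = ∑ t, ∑ l, p l * ((i' t + i t) *
            (if (t : ℕ) + 1 = k l then -1 else if (t : ℕ) = k l then 1 else 0)) := by
          refine Finset.sum_congr rfl fun t _ => ?_
          rw [hdiff t, Finset.mul_sum]
          exact Finset.sum_congr rfl fun l _ => by ring
      _ = ∑ l, ∑ t, p l * ((i' t + i t) *
            (if (t : ℕ) + 1 = k l then -1 else if (t : ℕ) = k l then 1 else 0)) :=
          Finset.sum_comm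
      _ = ∑ l, p l * ((i' ⟨k l, hkn l⟩ + i ⟨k l, hkn l⟩)
          - (i' ⟨k l - 1, hkn' l⟩ + i ⟨k l - 1, hkn' l⟩)) := by
          refine Finset.sum_congr rfl fun l _ => ?_
          rw [← Finset.mul_sum]
          congr 1
          have hk1 := (hk l).1
          have heq : ∀ t : Fin n, (i' t + i t) *
              (if (t : ℕ) + 1 = k l then -1 else if (t : ℕ) = k l then 1 else 0)
              = (if t = (⟨k l, hkn l⟩ : Fin n) then (i' t + i t) else 0)
                + (if t = (⟨k l - 1, hkn' l⟩ : Fin n) then -(i' t + i t) else 0) := by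
            intro t
            rcases eq_or_ne ((t : ℕ) + 1) (k l) with h | h
            · rw [if_pos h, if_neg (show t ≠ ⟨k l, hkn l⟩ from
                  fun he => by rw [Fin.ext_iff] at he; simp at he; omega),
                if_pos (show t = ⟨k l - 1, hkn' l⟩ by
                  simp only [Fin.ext_iff]; omega)]
              ring
            · rw [if_neg h]
              rcases eq_or_ne ((t : ℕ)) (k l) with h2 | h2
              · rw [if_pos h2, if_pos (show t = ⟨k l, hkn l⟩ by
                    simp only [Fin.ext_iff]; omega),
                  if_neg (show t ≠ ⟨k l - 1, hkn' l⟩ from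
                    fun he => by rw [Fin.ext_iff] at he; simp at he; omega)]
                ring
              · rw [if_neg h2, if_neg (show t ≠ ⟨k l, hkn l⟩ from
                    fun he => by rw [Fin.ext_iff] at he; simp at he; omega),
                  if_neg (show t ≠ ⟨k l - 1, hkn' l⟩ from
                    fun he => by rw [Fin.ext_iff] at he; simp at he; omega)]
                ring
          rw [Finset.sum_congr rfl fun t _ => heq t, Finset.sum_add_distrib,
            Finset.sum_ite_eq' Finset.univ (⟨k l, hkn l⟩ : Fin n) (fun t => i' t + i t),
            Finset.sum_ite_eq' Finset.univ (⟨k l - 1, hkn' l⟩ : Fin n)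
              (fun t => -(i' t + i t))]
          simp
          ring
  have hnonneg : 0 ≤ ∑ t, (i' t + i t) * (i' t - i t) := by
    rw [h1]
    refine Finset.sum_nonneg fun l _ => mul_nonneg (hp l).le ?_
    have hle : (⟨k l - 1, hkn' l⟩ : Fin n) ≤ ⟨k l, hkn l⟩ := by
      simp [Fin.le_def]
    have := add_le_add (hi' hle) (hi hle)
    omega
  have hpos : 0 < ∑ l, p l := by
    have : Nonempty (Fin j) := ⟨⟨0, hj⟩⟩
    exact Finset.sum_pos (fun l _ => hp l) Finset.univ_nonempty
  linarith
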